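/- arXiv:2102.13005 — 5 statements merged into one kernel-verified Lean document; each statement's English description precedes it below -/
import Mathlib

section
/- Suppose a finite group G has a perfect basis (g₁,…,g_n) with m_i = order(g_i), and let α = ∑_{g = g₁^{c₁}⋯g_n^{c_n}, 0 ≤ c_i < m_i} x₁^{c₁}⋯x_n^{c_n}·g in the group ring. If φ : G → GL(ℂ^r) is an r-dimensional representation, then det φ(α) = ∏_{i=1}^n (1 − x_i^{m_i})^r / det(I − x_i φ(g_i)). -/
open MvPolynomial

/-- Auxiliary: a sum over tuples of a scaled ordered product equals the ordered
product of the sums, in a (possibly noncommutative) algebra. -/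
theorem stmt4_aux_sum_prod {k R : Type*} [CommSemiring k] [Semiring R] [Algebra k R] :
    ∀ (n : ℕ) (m : Fin n → ℕ) (a : ∀ i : Fin n, Fin (m i) → k)
      (B : ∀ i : Fin n, Fin (m i) → R),
    ∑ c : ∀ i : Fin n, Fin (m i),
        (∏ i, a i (c i)) • (List.ofFn fun i => B i (c i)).prod
      = (List.ofFn fun i => ∑ c : Fin (m i), a i c • B i c).prod := by
  intro n
  induction n with
  | zero =>
      intro m a B
      simp
  | succ n ih =>
      intro m a B
      rw [← Equiv.sum_comp (Fin.consEquiv (fun i => Fin (m i)))]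
      rw [Fintype.sum_prod_type]
      have hterm : ∀ (x : Fin (m 0)) (p : ∀ i : Fin n, Fin (m i.succ)),
          (∏ i, a i ((Fin.consEquiv (fun i => Fin (m i))) (x, p) i)) •
            (List.ofFn fun i => B i ((Fin.consEquiv (fun i => Fin (m i))) (x, p) i)).prod
          = (a 0 x • B 0 x) *
            ((∏ i, a i.succ (p i)) • (List.ofFn fun i => B i.succ (p i)).prod) := by
        intro x p
        rw [smul_mul_smul_comm]
        congr 1
        · rw [Fin.prod_univ_succ]
          simp [Fin.consEquiv]
        · rw [List.ofFn_succ, List.prod_cons]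
          simp [Fin.consEquiv]
      simp only [hterm]
      rw [← Finset.sum_mul_sum]
      rw [List.ofFn_succ, List.prod_cons]
      congr 1
      exact ih (fun i => m i.succ) (fun i => a i.succ) (fun i => B i.succ)

/-- If `G` has a perfect basis `(g₁,…,gₙ)` with `mᵢ = order(gᵢ)`,
`α = ∑ x₁^{c₁}⋯xₙ^{cₙ}·g`, and `φ : G → GL(ℂ^r)`, then
`det φ(α) = ∏ᵢ (1 - xᵢ^{mᵢ})^r / det(I - xᵢ φ(gᵢ))`, stated with denominators cleared. -/
theorem stmt4 {G : Type*} [Group G] [Fintype G] {n : ℕ} (g : Fin n → G) (m : Fin n → ℕ)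
    (hm : ∀ i, m i = orderOf (g i))
    (hb : Function.Bijective
      (fun c : ∀ i : Fin n, Fin (m i) => (List.ofFn fun i => g i ^ ((c i : ℕ))).prod))
    {r : ℕ} (φ : G →* GL (Fin r) ℂ) :
    Matrix.det (∑ c : ∀ i : Fin n, Fin (m i),
        (∏ i, (X i : MvPolynomial (Fin n) ℂ) ^ ((c i : ℕ))) •
          ((φ ((List.ofFn fun i => g i ^ ((c i : ℕ))).prod) :
              Matrix (Fin r) (Fin r) ℂ).map MvPolynomial.C)) *
      ∏ i, Matrix.det
        (1 - (X i : MvPolynomial (Fin n) ℂ) •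
          ((φ (g i) : Matrix (Fin r) (Fin r) ℂ).map MvPolynomial.C)) =
      ∏ i, (1 - (X i : MvPolynomial (Fin n) ℂ) ^ (m i)) ^ r := by
  classical
  -- the monoid hom `G →* Matrix (Fin r) (Fin r) (MvPolynomial (Fin n) ℂ)`
  set ψ : G →* Matrix (Fin r) (Fin r) (MvPolynomial (Fin n) ℂ) :=
    ((MvPolynomial.C : ℂ →+* MvPolynomial (Fin n) ℂ).mapMatrix).toMonoidHom.comp
      ((Units.coeHom (Matrix (Fin r) (Fin r) ℂ)).comp φ) with hψ
  have hψdef : ∀ h : G, ψ h = ((φ h : Matrix (Fin r) (Fin r) ℂ).map MvPolynomial.C) := by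
    intro h; rfl
  -- rewrite the big sum as an ordered list product
  have hsum : (∑ c : ∀ i : Fin n, Fin (m i),
        (∏ i, (X i : MvPolynomial (Fin n) ℂ) ^ ((c i : ℕ))) •
          ((φ ((List.ofFn fun i => g i ^ ((c i : ℕ))).prod) :
              Matrix (Fin r) (Fin r) ℂ).map MvPolynomial.C))
      = (List.ofFn fun i => ∑ c : Fin (m i),
          (X i : MvPolynomial (Fin n) ℂ) ^ ((c : ℕ)) • (ψ (g i)) ^ ((c : ℕ))).prod := by
    rw [← stmt4_aux_sum_prod n m (fun i c => (X i : MvPolynomial (Fin n) ℂ) ^ ((c : ℕ)))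
      (fun i c => (ψ (g i)) ^ ((c : ℕ)))]
    refine Finset.sum_congr rfl ?_
    intro c _
    congr 1
    rw [← hψdef, ψ.map_list_prod, List.map_ofFn]
    have hfn : (⇑ψ ∘ fun i => g i ^ ((c i : ℕ))) = fun i => ψ (g i) ^ ((c i : ℕ)) := by
      funext i; simp [Function.comp, map_pow]
    rw [hfn]
  rw [hsum]
  -- determinant of a list product
  have hdet : ((List.ofFn fun i => ∑ c : Fin (m i),
          (X i : MvPolynomial (Fin n) ℂ) ^ ((c : ℕ)) • (ψ (g i)) ^ ((c : ℕ))).prod).det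
      = ∏ i, Matrix.det (∑ c : Fin (m i),
          (X i : MvPolynomial (Fin n) ℂ) ^ ((c : ℕ)) • (ψ (g i)) ^ ((c : ℕ))) := by
    rw [← Matrix.coe_detMonoidHom, map_list_prod, List.map_ofFn, List.prod_ofFn]
    simp [Matrix.coe_detMonoidHom]
  rw [hdet, ← Finset.prod_mul_distrib]
  refine Finset.prod_congr rfl ?_
  intro i _
  rw [← hψdef, ← Matrix.det_mul]
  -- geometric sum telescoping
  have hA : ∀ c : ℕ, (X i : MvPolynomial (Fin n) ℂ) ^ c • (ψ (g i)) ^ c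
      = ((X i : MvPolynomial (Fin n) ℂ) • ψ (g i)) ^ c := by
    intro c; rw [smul_pow]
  simp only [hA]
  set A : Matrix (Fin r) (Fin r) (MvPolynomial (Fin n) ℂ) :=
    (X i : MvPolynomial (Fin n) ℂ) • ψ (g i) with hAdef
  have hgeom : (∑ c : Fin (m i), A ^ (c : ℕ)) * (1 - A) = 1 - A ^ (m i) := by
    have h1 : (∑ c : Fin (m i), A ^ (c : ℕ)) = ∑ c ∈ Finset.range (m i), A ^ c :=
      Fin.sum_univ_eq_sum_range (fun c => A ^ c) (m i)
    rw [h1]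
    have h2 := geom_sum_mul A (m i)
    calc (∑ c ∈ Finset.range (m i), A ^ c) * (1 - A)
        = -((∑ c ∈ Finset.range (m i), A ^ c) * (A - 1)) := by
          rw [← mul_neg, neg_sub]
      _ = -(A ^ (m i) - 1) := by rw [h2]
      _ = 1 - A ^ (m i) := by rw [neg_sub]
  rw [hgeom]
  have hApow : A ^ (m i) = (X i : MvPolynomial (Fin n) ℂ) ^ (m i) • (1 : Matrix (Fin r) (Fin r) (MvPolynomial (Fin n) ℂ)) := by
    rw [hAdef, smul_pow, ← map_pow, hm i, pow_orderOf_eq_one, map_one]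
  rw [hApow]
  have hsmul1 : (1 : Matrix (Fin r) (Fin r) (MvPolynomial (Fin n) ℂ)) -
      (X i : MvPolynomial (Fin n) ℂ) ^ (m i) • 1
      = (1 - (X i : MvPolynomial (Fin n) ℂ) ^ (m i)) • 1 := by
    rw [sub_smul, one_smul]
  rw [hsmul1, Matrix.det_smul, Matrix.det_one, mul_one, Fintype.card_fin]
end

section
/- Let t_k = (k, k−1, …, 1) ∈ S_n for 2 ≤ k ≤ n. If w = t_n^{c_n} t_{n−1}^{c_{n−1}} ⋯ t₂^{c₂} with 0 ≤ c_i < i, then maj(w) = c_n + c_{n−1} + ⋯ + c₂, where maj(w) is the sum of the descents of w. -/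
/-- `t_{i+1} = (i+1, i, …, 1)`, the cycle sending (0-indexed) `j ↦ j-1` for `1 ≤ j ≤ i`
and `0 ↦ i`, fixing everything above `i`. -/
def cycT {n : ℕ} (i : Fin n) : Equiv.Perm (Fin n) := (Fin.cycleRange i)⁻¹

/-- The major index: the sum of positions `i ∈ {1,…,n-1}` (1-indexed) where
`w(i) > w(i+1)`. -/
def pmaj {n : ℕ} (w : Equiv.Perm (Fin n)) : ℕ :=
  ∑ i : Fin n, if h : i.1 + 1 < n then
    (if w ⟨i.1 + 1, h⟩ < w i then i.1 + 1 else 0) else 0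

/-! Left multiplication by `t_{i+1}` relabels values: `0` becomes `i` and `1, …, i` drop by one.
On a permutation `v` supported in `[0, i]` with `v i ≠ 0`, the position `p < i` of the value `0`
becomes a peak and all other comparisons are kept, so the descent at `p - 1` (if any) is replaced
by one at `p` and the major index rises by exactly one. Building `w` from the right, the factor
`t_{i+1}^{c}` acts on a permutation supported in `[0, i]`, and `c ≤ i` keeps the value at `i`
nonzero at every step, so it adds exactly `c` to the major index. -/

open Equiv Finset

theorem Equiv.Perm.apply_le_of_forall_lt_apply_eq {α : Type*} [LinearOrder α] {v : Perm α}
    {i j : α} (hfix : ∀ k, i < k → v k = k) (hj : j ≤ i) : v j ≤ i := by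
  by_contra! h
  exact h.not_ge ((v.injective (hfix _ h)).symm ▸ hj)

section MajorIndex

variable {n : ℕ}

def majTerm (w : Perm (Fin n)) (j : Fin n) : ℕ :=
  if h : j.1 + 1 < n then (if w ⟨j.1 + 1, h⟩ < w j then j.1 + 1 else 0) else 0

theorem pmaj_eq_sum_majTerm (w : Perm (Fin n)) : pmaj w = ∑ j, majTerm w j := rfl

@[simp]
theorem pmaj_one : pmaj (1 : Perm (Fin n)) = 0 := by
  simp [pmaj, Fin.lt_def]

theorem majTerm_congr {w v : Perm (Fin n)} {p j : Fin n}
    (horder : ∀ a b, a ≠ p → b ≠ p → (w a < w b ↔ v a < v b))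
    (hjp : j ≠ p) (hjp' : j.1 + 1 ≠ p.1) : majTerm w j = majTerm v j := by
  unfold majTerm
  by_cases h : j.1 + 1 < n
  · simp only [dif_pos h, horder ⟨j.1 + 1, h⟩ j (fun he => hjp' (Fin.ext_iff.mp he)) hjp]
  · rw [dif_neg h, dif_neg h]

theorem sum_ite_val_add_one_eq (p : Fin n) :
    ∑ j : Fin n, (if j.1 + 1 = p.1 then p.1 else 0) = p.1 := by
  obtain ⟨_ | q, hp⟩ := p
  · simp
  · have hq : q < n := by omega
    rw [sum_eq_single ⟨q, hq⟩
      (fun b _ hb => if_neg fun h => hb (Fin.ext (by simpa using h))) (by simp), if_pos rfl]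

/-- The descent of `v` at `p - 1` (if `p > 0`) becomes a descent of `w` at `p`. -/
theorem pmaj_eq_add_one {w v : Perm (Fin n)} {p : Fin n} (hp : p.1 + 1 < n)
    (horder : ∀ a b, a ≠ p → b ≠ p → (w a < w b ↔ v a < v b))
    (hvmin : ∀ a, a ≠ p → v p < v a)
    (hwpeak : ∀ a : Fin n, (a.1 + 1 = p.1 ∨ a.1 = p.1 + 1) → w a < w p) :
    pmaj w = pmaj v + 1 := by
  have key : ∀ j, majTerm w j + (if j.1 + 1 = p.1 then p.1 else 0) =
      majTerm v j + (if j = p then p.1 + 1 else 0) := by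
    intro j
    by_cases hjp : j = p
    · subst hjp
      have hw : w ⟨j.1 + 1, hp⟩ < w j := hwpeak _ (Or.inr rfl)
      have hv : ¬ v ⟨j.1 + 1, hp⟩ < v j :=
        not_lt.2 (hvmin _ (fun he => by simpa using congrArg Fin.val he)).le
      simp [majTerm, hp, hw, hv]
    by_cases hj : j.1 + 1 = p.1
    · have hjn : j.1 + 1 < n := hj ▸ p.2
      have hsucc : (⟨j.1 + 1, hjn⟩ : Fin n) = p := Fin.ext hj
      rw [majTerm, majTerm, dif_pos hjn, dif_pos hjn, hsucc,
        if_neg (not_lt.2 (hwpeak j (Or.inl hj)).le), if_pos (hvmin j hjp), if_neg hjp, if_pos hj,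
        hj, zero_add]
    · simp [majTerm_congr horder hjp hj, hjp, hj]
  have hsum := sum_congr rfl (fun j (_ : j ∈ univ) => key j)
  simp only [sum_add_distrib, sum_ite_val_add_one_eq, sum_ite_eq', mem_univ,
    if_true, ← pmaj_eq_sum_majTerm] at hsum
  omega

end MajorIndex

section Cycle

variable {n : ℕ}

theorem cycT_zero (i : Fin (n + 1)) : cycT i 0 = i :=
  Fin.cycleRange_symm_zero i

theorem cycT_succ (i : Fin (n + 1)) (j : Fin n) : cycT i j.succ = i.succAbove j :=
  Fin.cycleRange_symm_succ i j

theorem cycT_of_lt {i j : Fin (n + 1)} (h : i < j) : cycT i j = j :=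
  Perm.inv_eq_iff_eq.2 (Fin.cycleRange_of_gt h).symm

theorem cycT_pow_of_lt {i j : Fin (n + 1)} (h : i < j) (c : ℕ) : (cycT i ^ c) j = j :=
  Perm.pow_apply_eq_self_of_apply_eq_self (cycT_of_lt h) c

theorem cycT_lt_cycT_iff (i : Fin (n + 1)) {a b : Fin (n + 1)} (ha : a ≠ 0) (hb : b ≠ 0) :
    cycT i a < cycT i b ↔ a < b := by
  obtain ⟨a, rfl⟩ := Fin.exists_succ_eq.2 ha
  obtain ⟨b, rfl⟩ := Fin.exists_succ_eq.2 hb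
  rw [cycT_succ, cycT_succ, Fin.succAbove_lt_succAbove_iff, Fin.succ_lt_succ_iff]

theorem val_cycT_of_le {i j : Fin (n + 1)} (hj : j ≠ 0) (hji : j ≤ i) :
    (cycT i j).1 = j.1 - 1 := by
  obtain ⟨j, rfl⟩ := Fin.exists_succ_eq.2 hj
  rw [cycT_succ, Fin.succAbove_of_castSucc_lt _ _ (Fin.castSucc_lt_iff_succ_le.2 hji)]
  simp

theorem cycT_lt_cycT_zero {i b : Fin (n + 1)} (hb : b ≠ 0) (hbi : b ≤ i) :
    cycT i b < cycT i 0 := by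
  rw [cycT_zero, Fin.lt_def, val_cycT_of_le hb hbi]
  have := Fin.pos_iff_ne_zero.2 hb
  have := Fin.le_def.1 hbi
  omega

theorem val_cycT_pow_self {i : Fin (n + 1)} {c : ℕ} (hc : c ≤ i.1) :
    ((cycT i ^ c) i).1 = i.1 - c := by
  induction c with
  | zero => simp
  | succ c ih =>
    rw [pow_succ', Perm.mul_apply, val_cycT_of_le, ih (by omega)]
    · omega
    · rw [Ne, Fin.ext_iff, ih (by omega), Fin.val_zero]; omega
    · rw [Fin.le_def, ih (by omega)]; omega

end Cycle

section Product

variable {n : ℕ}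

theorem pmaj_cycT_mul {i : Fin (n + 1)} {v : Perm (Fin (n + 1))}
    (hfix : ∀ j, i < j → v j = j) (hvi : v i ≠ 0) : pmaj (cycT i * v) = pmaj v + 1 := by
  set p := v.symm 0
  have hvp : v p = 0 := v.apply_symm_apply 0
  have hv_ne : ∀ a, a ≠ p → v a ≠ 0 := fun a ha h => ha (v.injective (h.trans hvp.symm))
  have hpi : p < i := by
    refine lt_of_le_of_ne (not_lt.1 fun h => ?_) fun h => hvi (h ▸ hvp)
    have := hfix p h
    rw [hvp] at this
    exact (Fin.not_lt_zero i) (this ▸ h)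
  refine pmaj_eq_add_one (p := p) (by have := Fin.lt_def.1 hpi; omega)
    (fun a b ha hb => cycT_lt_cycT_iff i (hv_ne a ha) (hv_ne b hb))
    (fun a ha => hvp ▸ Fin.pos_iff_ne_zero.2 (hv_ne a ha)) fun a ha => ?_
  have hap : a ≠ p := by rintro rfl; omega
  rw [Perm.mul_apply, Perm.mul_apply, hvp]
  refine cycT_lt_cycT_zero (hv_ne a hap) (Perm.apply_le_of_forall_lt_apply_eq hfix ?_)
  rw [Fin.le_def]
  have := Fin.lt_def.1 hpi
  omega

theorem pmaj_cycT_pow_mul {i : Fin (n + 1)} {u : Perm (Fin (n + 1))}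
    (hfix : ∀ j, i ≤ j → u j = j) {c : ℕ} (hc : c ≤ i.1) :
    pmaj (cycT i ^ c * u) = pmaj u + c := by
  induction c with
  | zero => simp
  | succ c ih =>
    have hfix' : ∀ j, i < j → (cycT i ^ c * u) j = j := fun j hj => by
      rw [Perm.mul_apply, hfix j hj.le, cycT_pow_of_lt hj]
    have hvi : (cycT i ^ c * u) i ≠ 0 := by
      rw [Perm.mul_apply, hfix i le_rfl, Ne, Fin.ext_iff, val_cycT_pow_self (by omega),
        Fin.val_zero]
      omega
    rw [pow_succ', mul_assoc, pmaj_cycT_mul hfix' hvi, ih (by omega)]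
    ring

theorem prod_map_cycT_pow_apply (l : List (Fin (n + 1))) (e : Fin (n + 1) → ℕ)
    {j : Fin (n + 1)} (hj : ∀ i ∈ l, i < j) : (l.map fun i => cycT i ^ e i).prod j = j := by
  suffices (l.map fun i => cycT i ^ e i).prod ∈ MulAction.stabilizer (Perm (Fin (n + 1))) j from
    this
  refine Subgroup.list_prod_mem _ fun g hg => ?_
  obtain ⟨i, hi, rfl⟩ := List.mem_map.1 hg
  exact cycT_pow_of_lt (hj i hi) (e i)

theorem pmaj_prod_map_cycT_pow (l : List (Fin (n + 1))) (e : Fin (n + 1) → ℕ)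
    (hl : l.Pairwise (· > ·)) (he : ∀ i ∈ l, e i ≤ i.1) :
    pmaj (l.map fun i => cycT i ^ e i).prod = (l.map e).sum := by
  induction l with
  | nil => simp
  | cons i l ih =>
    obtain ⟨hil, hl⟩ := List.pairwise_cons.1 hl
    rw [List.map_cons, List.prod_cons, pmaj_cycT_pow_mul
      (fun j hj => prod_map_cycT_pow_apply l e fun k hk => lt_of_lt_of_le (hil k hk) hj)
      (he i List.mem_cons_self), ih hl fun k hk => he k (List.mem_cons_of_mem i hk),
      List.map_cons, List.sum_cons, add_comm]

end Product

/-- If `w = t_n^{c_n} t_{n-1}^{c_{n-1}} ⋯ t₂^{c₂}` with `0 ≤ c_i < i`,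
then `maj(w) = c_n + c_{n-1} + ⋯ + c₂`. -/
theorem stmt9 (n : ℕ) (c : ∀ i : Fin n, Fin (i.1 + 1)) :
    pmaj ((List.ofFn fun j : Fin n => (cycT j.rev) ^ ((c j.rev : ℕ))).prod) =
      ∑ i : Fin n, (c i : ℕ) := by
  rcases n with _ | n
  · simp
  have hmap : (List.ofFn fun j => cycT j.rev ^ (c j.rev : ℕ)) =
      (List.ofFn Fin.rev).map fun i => cycT i ^ (c i : ℕ) := by
    rw [List.map_ofFn]; rfl
  have hl : (List.ofFn (Fin.rev (n := n + 1))).Pairwise (· > ·) :=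
    List.pairwise_ofFn.2 fun _ _ h => Fin.rev_lt_rev.2 h
  rw [hmap, pmaj_prod_map_cycT_pow _ _ hl fun i _ => Nat.lt_succ_iff.1 (c i).2, List.map_ofFn,
    List.sum_ofFn]
  exact Fintype.sum_equiv Fin.revPerm _ _ fun _ => rfl
end

section
/- Let m, n ≥ 1 and let G = S_n^m = S_n ⋉ (ℤ/mℤ)^n be the group of m-colored permutations. Let t̃_k = (t_k, b) where t_k = (k,k−1,…,1) ∈ S_n (with t₁ the identity) and b = (1,0,…,0) ∈ (ℤ/mℤ)^n. Then (t̃_n, t̃_{n−1}, …, t̃₁) is a perfect basis of G: t̃_k has order mk, and every g ∈ G is uniquely expressible as t̃_n^{c_n} ⋯ t̃₁^{c₁} with 0 ≤ c_k < mk. -/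
/-- The group `Sₙᵐ = Sₙ ⋉ (ℤ/mℤ)ⁿ` of `m`-colored permutations, with
`(g,x)(h,y) = (gh, x∘h + y)` where `(x∘h)_i = x_{h(i)}`. -/
def ColoredPerm (n m : ℕ) : Type := Equiv.Perm (Fin n) × (Fin n → ZMod m)

namespace ColoredPerm

variable {n m : ℕ}

instance : Mul (ColoredPerm n m) := ⟨fun a b => (a.1 * b.1, a.2 ∘ ⇑b.1 + b.2)⟩
instance : One (ColoredPerm n m) := ⟨(1, 0)⟩
instance : Inv (ColoredPerm n m) := ⟨fun a => (a.1⁻¹, -(a.2 ∘ ⇑(a.1⁻¹)))⟩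

theorem mul_def (a b : ColoredPerm n m) : a * b = (a.1 * b.1, a.2 ∘ ⇑b.1 + b.2) := rfl
theorem one_def : (1 : ColoredPerm n m) = ((1 : Equiv.Perm (Fin n)), 0) := rfl
theorem inv_def (a : ColoredPerm n m) : a⁻¹ = (a.1⁻¹, -(a.2 ∘ ⇑(a.1⁻¹))) := rfl

instance : Group (ColoredPerm n m) where
  mul_assoc a b c := by
    rw [mul_def, mul_def, mul_def, mul_def]
    refine Prod.ext (mul_assoc _ _ _) ?_
    funext i
    simp [Function.comp, Equiv.Perm.mul_apply, add_assoc]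
  one_mul a := by
    rw [mul_def, one_def]
    refine Prod.ext (one_mul _) ?_
    funext i
    simp
  mul_one a := by
    rw [mul_def, one_def]
    refine Prod.ext (mul_one _) ?_
    funext i
    simp
  inv_mul_cancel a := by
    rw [mul_def, one_def]
    refine Prod.ext (inv_mul_cancel _) ?_
    funext i
    show -(a.2 (a.1⁻¹ (a.1 i))) + a.2 i = 0
    simp

instance [NeZero m] : Fintype (ColoredPerm n m) :=
  inferInstanceAs (Fintype (Equiv.Perm (Fin n) × (Fin n → ZMod m)))

instance : DecidableEq (ColoredPerm n m) :=
  inferInstanceAs (DecidableEq (Equiv.Perm (Fin n) × (Fin n → ZMod m)))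

/-- total color -/
def col (g : ColoredPerm n m) : ℕ := ∑ i, (g.2 i).val

/-- major index of a colored permutation w.r.t. the order
`n > ⋯ > 1 > n̄ > ⋯ > 1̄ > n̿ > ⋯`: the letter at position `i` (value `w(i)` with `x_i`
bars) is larger than the one at position `i+1` iff its color is smaller, or the colors
agree and its value is larger. -/
def cmaj (g : ColoredPerm n m) : ℕ :=
  ∑ i : Fin n, if h : i.1 + 1 < n then
    (if ((g.2 i).val < (g.2 ⟨i.1 + 1, h⟩).val ∨
        ((g.2 i).val = (g.2 ⟨i.1 + 1, h⟩).val ∧ g.1 ⟨i.1 + 1, h⟩ < g.1 i))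
      then i.1 + 1 else 0) else 0

/-- flag major index -/
def fmaj (g : ColoredPerm n m) : ℕ := m * cmaj g + col g

/-- `t̃_{i+1} = (t_{i+1}, (1,0,…,0))` where `t_{i+1} = (i+1, i, …, 1)`. -/
def ttil (i : Fin n) : ColoredPerm n m :=
  ((Fin.cycleRange i)⁻¹, fun j => if (j : ℕ) = 0 then 1 else 0)

end ColoredPerm

/-!
`Sₙᵐ` acts faithfully on colored letters `Fin n × ZMod m` by `(σ, x) • (i, c) = (σ i, x i + c)`.
On the letters at positions `≤ k`, `t̃_k` is a single cycle of length `m (k + 1)`: it walks down the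
positions `k, k - 1, …, 0` and raises the color by one on each return to `k` (`helix`). Hence
`t̃_k` has order `m (k + 1)`, and the powers `t̃_k ^ a`, `a < m (k + 1)`, lie in distinct left
cosets of the stabilizer of all letters at positions `≥ k`, which contains `t̃_0, …, t̃_{k-1}`.
Peeling off the leading factor shows that `c ↦ t̃_n ^ c_n ⋯ t̃_1 ^ c_1` is injective; it is
bijective because both sides have `n! mⁿ` elements.
-/

theorem eq_of_prod_ofFn_rev_pow_eq {G : Type*} [Group G] (H : ℕ → Subgroup G) (hH : Monotone H)
    {k : ℕ} (t : Fin k → G) (N : Fin k → ℕ) (ht : ∀ i, t i ∈ H (i.val + 1))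
    (hcosets : ∀ i a a', a < N i → a' < N i → (t i ^ a)⁻¹ * t i ^ a' ∈ H i → a = a')
    {c c' : Fin k → ℕ} (hc : ∀ i, c i < N i) (hc' : ∀ i, c' i < N i)
    (h : (List.ofFn fun j => t j.rev ^ c j.rev).prod =
      (List.ofFn fun j => t j.rev ^ c' j.rev).prod) :
    c = c' := by
  induction k with
  | zero => exact funext fun i => i.elim0
  | succ k ih =>
    simp only [List.ofFn_succ, List.prod_cons, Fin.rev_zero, Fin.rev_succ] at h
    have hmem : ∀ c : Fin (k + 1) → ℕ,
        (List.ofFn fun j : Fin k => t j.rev.castSucc ^ c j.rev.castSucc).prod ∈ H k := by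
      intro c
      refine Subgroup.list_prod_mem _ fun x hx => ?_
      obtain ⟨j, rfl⟩ := List.mem_ofFn.mp hx
      exact hH (show (j.rev.castSucc : ℕ) + 1 ≤ k from j.rev.isLt) (Subgroup.pow_mem _ (ht _) _)
    have hlast : c (Fin.last k) = c' (Fin.last k) := by
      refine hcosets _ _ _ (hc _) (hc' _) ?_
      rw [Fin.val_last]
      convert mul_mem (hmem c) (inv_mem (hmem c')) using 1
      rw [inv_mul_eq_iff_eq_mul, ← mul_assoc, h, mul_inv_cancel_right]
    rw [hlast, mul_right_inj] at h
    have hinit := ih (fun i => t i.castSucc) (fun i => N i.castSucc) (fun i => ht i.castSucc)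
      (fun i => hcosets _) (fun i => hc _) (fun i => hc' _) h
    funext i
    induction i using Fin.lastCases with
    | last => exact hlast
    | cast i => exact congrFun hinit i

theorem card_pi_fin_mul_succ {n m : ℕ} :
    Fintype.card (∀ i : Fin n, Fin (m * (i + 1))) = n.factorial * m ^ n := by
  rw [Fintype.card_pi]
  simp only [Fintype.card_fin]
  rw [Fin.prod_univ_eq_prod_range (fun i => m * (i + 1)), Finset.prod_mul_distrib,
    Finset.prod_const, Finset.card_range, Finset.prod_range_add_one_eq_factorial, mul_comm]

namespace ColoredPerm

variable {n m : ℕ}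

instance : MulAction (ColoredPerm n m) (Fin n × ZMod m) where
  smul g p := (g.1 p.1, g.2 p.1 + p.2)
  one_smul p := Prod.ext rfl (zero_add p.2)
  mul_smul _ _ _ := Prod.ext rfl (add_assoc _ _ _)

theorem smul_def (g : ColoredPerm n m) (p : Fin n × ZMod m) :
    g • p = (g.1 p.1, g.2 p.1 + p.2) :=
  rfl

theorem ext_smul {g h : ColoredPerm n m} (H : ∀ i : Fin n, g • (i, (0 : ZMod m)) = h • (i, 0)) :
    g = h := by
  have key : ∀ i, g.1 i = h.1 i ∧ g.2 i = h.2 i := fun i => by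
    simpa [smul_def] using H i
  exact Prod.ext (Equiv.ext fun i => (key i).1) (funext fun i => (key i).2)

def fixingFrom (k : ℕ) : Subgroup (ColoredPerm n m) :=
  fixingSubgroup _ {p : Fin n × ZMod m | k ≤ p.1.val}

theorem fixingFrom_mono : Monotone (fixingFrom : ℕ → Subgroup (ColoredPerm n m)) :=
  fun _ _ hkk' => fixingSubgroup_antitone _ _ fun _ hp => le_trans hkk' hp

theorem ttil_smul (k : Fin n) (p : Fin n × ZMod m) :
    (ttil k : ColoredPerm n m) • p =
      ((Fin.cycleRange k)⁻¹ p.1, (if (p.1 : ℕ) = 0 then 1 else 0) + p.2) :=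
  rfl

theorem ttil_mem_fixingFrom (k : Fin n) :
    ttil k ∈ (fixingFrom (k.val + 1) : Subgroup (ColoredPerm n m)) := by
  refine (mem_fixingSubgroup_iff _).mpr ?_
  rintro ⟨j, c⟩ (hj : k.val + 1 ≤ j)
  rw [ttil_smul, if_neg (show (j : ℕ) ≠ 0 by omega), zero_add,
    Equiv.Perm.inv_eq_iff_eq.mpr (Fin.cycleRange_of_gt (show k < j from hj)).symm]

/-- The letter reached from `(k, 0)` after `N` steps of `t̃_k`. -/
def helix (k : Fin n) (N : ℕ) : Fin n × ZMod m :=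
  (⟨k - N % (k + 1), by omega⟩, ((N / (k + 1) : ℕ) : ZMod m))

theorem helix_add_mul {k : Fin n} {r : ℕ} (hr : r < k + 1) (q : ℕ) :
    helix k (r + (k + 1) * q) = ((⟨k - r, by omega⟩, (q : ZMod m)) : Fin n × ZMod m) := by
  obtain ⟨hdiv, hmod⟩ := (Nat.div_mod_unique (b := k + 1) (d := q) k.val.succ_pos).mpr ⟨rfl, hr⟩
  simp only [helix, hdiv, hmod]

theorem ttil_smul_helix (k : Fin n) (N : ℕ) :
    (ttil k : ColoredPerm n m) • (helix k N : Fin n × ZMod m) = helix k (N + 1) := by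
  obtain ⟨q, r, hr, rfl⟩ : ∃ q r : ℕ, r < k + 1 ∧ N = r + (k + 1) * q :=
    ⟨N / (k + 1), N % (k + 1), Nat.mod_lt _ k.val.succ_pos, (Nat.mod_add_div N (k + 1)).symm⟩
  rw [helix_add_mul hr, ttil_smul]
  rcases (Nat.lt_succ_iff.mp hr).lt_or_eq with hrk | rfl
  · rw [show r + (k + 1) * q + 1 = (r + 1) + (k + 1) * q by ring, helix_add_mul (by omega),
      if_neg (by simp; omega), zero_add]
    refine Prod.ext (Equiv.Perm.inv_eq_iff_eq.mpr (Fin.ext ?_)) rfl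
    rw [Fin.coe_cycleRange_of_lt (Fin.lt_def.mpr (show k.val - (r + 1) < k by omega))]
    dsimp only
    omega
  · rw [show (k : ℕ) + (k + 1) * q + 1 = 0 + (k + 1) * (q + 1) by ring,
      helix_add_mul k.val.succ_pos, if_pos (by simp), Nat.cast_succ, add_comm (1 : ZMod m)]
    refine Prod.ext (Equiv.Perm.inv_eq_iff_eq.mpr (Fin.ext ?_)) rfl
    simp [Fin.coe_cycleRange_of_le]

theorem ttil_pow_smul_helix (k : Fin n) (a N : ℕ) :
    (ttil k : ColoredPerm n m) ^ a • (helix k N : Fin n × ZMod m) = helix k (N + a) := by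
  induction a with
  | zero => rw [pow_zero, one_smul, add_zero]
  | succ a ih => rw [pow_succ', mul_smul, ih, ttil_smul_helix, add_assoc]

theorem helix_periodic (k : Fin n) : (helix k : ℕ → Fin n × ZMod m).Periodic (m * (k + 1)) := by
  intro N
  have hk : 0 < k.val + 1 := k.val.succ_pos
  simp only [helix, Nat.add_mul_mod_self_right, Nat.add_mul_div_right _ _ hk, Nat.cast_add,
    ZMod.natCast_self, add_zero]

theorem helix_injOn (k : Fin n) :
    Set.InjOn (helix k : ℕ → Fin n × ZMod m) (Set.Iio (m * (k + 1))) := by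
  intro a (ha : a < m * (k + 1)) a' (ha' : a' < m * (k + 1)) h
  have hk : 0 < k.val + 1 := k.val.succ_pos
  simp only [helix, Prod.mk.injEq, Fin.mk.injEq] at h
  obtain ⟨hmod, hdiv⟩ := h
  have hmod' : a % (k + 1) = a' % (k + 1) := by
    have := Nat.mod_lt a hk; have := Nat.mod_lt a' hk; omega
  have hdiv' : a / (k + 1) = a' / (k + 1) := by
    rw [ZMod.natCast_eq_natCast_iff', Nat.mod_eq_of_lt, Nat.mod_eq_of_lt] at hdiv
    · exact hdiv
    all_goals exact Nat.div_lt_of_lt_mul (by linarith)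
  rw [← Nat.div_add_mod a (k + 1), hmod', hdiv', Nat.div_add_mod]

theorem helix_sub {k j : Fin n} (hj : j ≤ k) : helix k (k - j) = ((j, 0) : Fin n × ZMod m) := by
  have hlt : k.val - j < k + 1 := by omega
  simp only [helix, Nat.mod_eq_of_lt hlt, Nat.div_eq_of_lt hlt, Nat.cast_zero, Prod.mk.injEq,
    and_true]
  ext; simp; omega

theorem ttil_pow_period (k : Fin n) : (ttil k : ColoredPerm n m) ^ (m * (k + 1)) = 1 := by
  refine ext_smul fun j => ?_
  rcases le_or_gt j k with hj | hj
  · rw [← helix_sub hj, ttil_pow_smul_helix, helix_periodic, one_smul]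
  · rw [one_smul]
    exact (mem_fixingSubgroup_iff _).mp (Subgroup.pow_mem _ (ttil_mem_fixingFrom k) _) (j, 0) hj

theorem orderOf_ttil [NeZero m] (k : Fin n) : orderOf (ttil k : ColoredPerm n m) = m * (k + 1) := by
  have hpos : 0 < m * (k.val + 1) := Nat.mul_pos (NeZero.pos m) k.val.succ_pos
  refine (orderOf_eq_iff hpos).mpr ⟨ttil_pow_period k, fun a ha ha0 h => ha0.ne' ?_⟩
  have := congrArg (· • (helix k 0 : Fin n × ZMod m)) h
  simp only [ttil_pow_smul_helix, one_smul, zero_add] at this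
  exact helix_injOn k ha hpos this

theorem eq_of_ttil_pow_inv_mul_mem_fixingFrom {k : Fin n} {a a' : ℕ} (ha : a < m * (k + 1))
    (ha' : a' < m * (k + 1))
    (h : (ttil k ^ a)⁻¹ * ttil k ^ a' ∈ (fixingFrom k : Subgroup (ColoredPerm n m))) :
    a = a' := by
  have hfix := (mem_fixingSubgroup_iff _).mp h (helix k 0) (by simp [helix])
  rw [mul_smul, inv_smul_eq_iff, ttil_pow_smul_helix, ttil_pow_smul_helix, zero_add,
    zero_add] at hfix
  exact (helix_injOn k ha' ha hfix).symm

theorem card_eq [NeZero m] : Fintype.card (ColoredPerm n m) = n.factorial * m ^ n := by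
  change Fintype.card (Equiv.Perm (Fin n) × (Fin n → ZMod m)) = _
  rw [Fintype.card_prod, Fintype.card_perm, Fintype.card_fun, ZMod.card, Fintype.card_fin]

end ColoredPerm

open ColoredPerm in
theorem stmt13_general (n m : ℕ) (hm : 1 ≤ m) :
    (∀ i : Fin n, orderOf (ttil (m := m) i) = m * (i.1 + 1)) ∧
    (∀ g : ColoredPerm n m, ∃! c : ∀ i : Fin n, Fin (m * (i.1 + 1)),
      g = (List.ofFn fun j : Fin n => (ttil j.rev) ^ ((c j.rev : ℕ))).prod) := by
  have : NeZero m := ⟨by omega⟩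
  refine ⟨orderOf_ttil, fun g => ?_⟩
  let Φ (c : ∀ i : Fin n, Fin (m * (i.1 + 1))) : ColoredPerm n m :=
    (List.ofFn fun j : Fin n => (ttil j.rev) ^ ((c j.rev : ℕ))).prod
  have hinj : Φ.Injective := fun c c' h => funext fun i => Fin.ext <| congrFun
    (eq_of_prod_ofFn_rev_pow_eq fixingFrom fixingFrom_mono ttil _ ttil_mem_fixingFrom
      (fun _ _ _ => eq_of_ttil_pow_inv_mul_mem_fixingFrom) (fun i => (c i).2)
      (fun i => (c' i).2) h) i
  have hbij : Φ.Bijective :=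
    (Fintype.bijective_iff_injective_and_card Φ).mpr
      ⟨hinj, card_pi_fin_mul_succ.trans card_eq.symm⟩
  simpa only [eq_comm] using hbij.existsUnique g

open ColoredPerm in
/-- `(t̃_n, …, t̃_1)` is a perfect basis of the colored permutation group
`Sₙᵐ`: each `t̃_k = (t_k, (1,0,…,0))` has order `mk`, and every element is uniquely
`t̃_n^{c_n} ⋯ t̃_1^{c_1}` with `0 ≤ c_k < mk`. -/
theorem stmt13 (n m : ℕ) (hn : 1 ≤ n) (hm : 1 ≤ m) :
    (∀ i : Fin n, orderOf (ttil (m := m) i) = m * (i.1 + 1)) ∧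
    (∀ g : ColoredPerm n m, ∃! c : ∀ i : Fin n, Fin (m * (i.1 + 1)),
      g = (List.ofFn fun j : Fin n => (ttil j.rev) ^ ((c j.rev : ℕ))).prod) :=
  stmt13_general n m hm
end

section
/- For any signed permutation (ε,w) ∈ B_n, maj_B(ε,w) = maj_A(ε,w) + nneg(ε,w), where maj_A is the sum of A-descents (including 0 when the first letter is negative), maj_B is the sum of B-descents (including n when the last letter is negative), and nneg is the number of negative letters. -/
/-- The hyperoctahedral group `Bₙ = {±1}ⁿ ⋊ Sₙ` of signed permutations; an element is a
pair `(w, ε)` of a permutation `w` and a sign vector, encoded with `ε i = 1` in `ZMod 2`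
meaning coordinate `i` is negative. Multiplication is
`(ε,u)(ε',v) = (ε·(u·ε'), uv)` with `(u·ε')_i = ε'_{u⁻¹(i)}` (written additively). -/
def SignedPerm (n : ℕ) : Type := Equiv.Perm (Fin n) × (Fin n → ZMod 2)

namespace SignedPerm

variable {n : ℕ}

instance : Mul (SignedPerm n) := ⟨fun a b => (a.1 * b.1, a.2 + b.2 ∘ ⇑(a.1⁻¹))⟩
instance : One (SignedPerm n) := ⟨(1, 0)⟩
instance : Inv (SignedPerm n) := ⟨fun a => (a.1⁻¹, -(a.2 ∘ ⇑a.1))⟩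

theorem mul_def (a b : SignedPerm n) : a * b = (a.1 * b.1, a.2 + b.2 ∘ ⇑(a.1⁻¹)) := rfl
theorem one_def : (1 : SignedPerm n) = ((1 : Equiv.Perm (Fin n)), 0) := rfl
theorem inv_def (a : SignedPerm n) : a⁻¹ = (a.1⁻¹, -(a.2 ∘ ⇑a.1)) := rfl

instance : Group (SignedPerm n) where
  mul_assoc a b c := by
    rw [mul_def, mul_def, mul_def, mul_def]
    refine Prod.ext (mul_assoc _ _ _) ?_
    funext i
    simp [Function.comp, Equiv.Perm.mul_apply, add_assoc]
  one_mul a := by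
    rw [mul_def, one_def]
    refine Prod.ext (one_mul _) ?_
    funext i
    simp
  mul_one a := by
    rw [mul_def, one_def]
    refine Prod.ext (mul_one _) ?_
    funext i
    simp
  inv_mul_cancel a := by
    rw [mul_def, inv_def, one_def]
    refine Prod.ext (inv_mul_cancel _) ?_
    funext i
    simp [Function.comp, CharTwo.add_self_eq_zero]

/-- The signed letter (as an integer in `{±1,…,±n}`) at (0-indexed) position `i` of the
one-line notation: the value `w(i)+1` (1-indexed), negated when its sign is `-1`. -/
def letter (g : SignedPerm n) (i : Fin n) : ℤ :=
  (if g.2 (g.1 i) = 1 then -1 else 1) * (((g.1 i : ℕ) : ℤ) + 1)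

/-- The A-major index: the sum of the A-descents, the positions `i ∈ {1,…,n-1}`
(1-indexed) where `letter i >_A letter (i+1)` in the natural integer order (the
A-descent at `0`, present when the first letter is negative, contributes `0`). -/
def majA (g : SignedPerm n) : ℕ :=
  ∑ i : Fin n, if h : i.1 + 1 < n then
    (if letter g ⟨i.1 + 1, h⟩ < letter g i then i.1 + 1 else 0) else 0

/-- The key of a signed letter for the B-order `0 <_B 1 <_B ⋯ <_B n <_B -n <_B ⋯ <_B -1`. -/
def bKey (n : ℕ) (a : ℤ) : ℤ := if 0 ≤ a then a else 2 * (n : ℤ) + 1 + a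

/-- The B-major index: the sum of the B-descents, the positions `i ∈ {1,…,n-1}`
(1-indexed) where `letter i >_B letter (i+1)`, together with `n` when the last letter
is negative. -/
def majB (g : SignedPerm n) : ℕ :=
  ∑ i : Fin n, if h : i.1 + 1 < n then
    (if bKey n (letter g ⟨i.1 + 1, h⟩) < bKey n (letter g i) then i.1 + 1 else 0)
  else (if letter g i < 0 then n else 0)

/-- The negative set `Neg(ε,w) = {i : εᵢ = -1}`. -/
def negSet (g : SignedPerm n) : Finset (Fin n) := Finset.univ.filter fun i => g.2 i = 1

/-- The number of negative letters. -/
def nneg (g : SignedPerm n) : ℕ := (negSet g).card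

end SignedPerm

/-!
Where two adjacent letters have the same sign the orders A and B agree; where their signs differ,
exactly one of the two orders sees a descent, and it is the B-order iff the first letter is
negative. Hence, with `F j = [letter j is negative]` and `F (n+1) = 0`, the position `i` contributes
`i * (F i - F (i+1))` to `maj_B - maj_A`; at `i = n` this is the extra B-descent. Summation by parts
turns `∑ i * (F i - F (i+1))` into `∑ F i = nneg`.
-/

open Finset

theorem Finset.sum_range_succ_mul_sub {R : Type*} [CommRing R] (G : ℕ → R) (n : ℕ) :
    ∑ i ∈ range n, ((i : R) + 1) * (G i - G (i + 1)) = ∑ i ∈ range n, G i - n * G n := by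
  induction n with
  | zero => simp
  | succ m ih =>
    rw [sum_range_succ, sum_range_succ (f := G), ih]
    push_cast
    ring

namespace SignedPerm

variable {n : ℕ}

theorem ite_bKey_lt_bKey {a b : ℤ} (ha : |a| ≤ n) (hb : |b| ≤ n) :
    (if bKey n b < bKey n a then 1 else 0 : ℤ) =
      (if b < a then 1 else 0) + ((if a < 0 then 1 else 0) - (if b < 0 then 1 else 0)) := by
  rw [abs_le] at ha hb
  unfold bKey
  split_ifs <;> omega

theorem abs_letter_le (g : SignedPerm n) (i : Fin n) : |letter g i| ≤ n := by
  have := (g.1 i).isLt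
  unfold letter
  split_ifs <;> rw [abs_le] <;> omega

theorem letter_neg_iff (g : SignedPerm n) (i : Fin n) : letter g i < 0 ↔ g.2 (g.1 i) = 1 := by
  unfold letter
  split_ifs with h <;> simp [h] <;> omega

theorem nneg_eq_card_letter_neg (g : SignedPerm n) : nneg g = #{i | letter g i < 0} := by
  simp only [letter_neg_iff]
  exact (card_equiv g.1 (by simp [negSet])).symm

def negIndicator (g : SignedPerm n) (j : ℕ) : ℤ :=
  if h : j < n then if letter g ⟨j, h⟩ < 0 then 1 else 0 else 0

theorem sum_range_negIndicator (g : SignedPerm n) :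
    ∑ j ∈ range n, negIndicator g j = nneg g := by
  rw [← Fin.sum_univ_eq_sum_range, nneg_eq_card_letter_neg, card_filter]
  push_cast
  exact sum_congr rfl fun i _ => by simp [negIndicator]

theorem majB_summand_eq (g : SignedPerm n) (i : Fin n) :
    (((if h : i.1 + 1 < n then
        (if bKey n (letter g ⟨i.1 + 1, h⟩) < bKey n (letter g i) then i.1 + 1 else 0)
      else (if letter g i < 0 then n else 0) : ℕ)) : ℤ) =
      ((if h : i.1 + 1 < n then
        (if letter g ⟨i.1 + 1, h⟩ < letter g i then i.1 + 1 else 0) else 0 : ℕ) : ℤ) +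
      ((i.1 : ℤ) + 1) * (negIndicator g i - negIndicator g (i + 1)) := by
  have hi : negIndicator g i = if letter g i < 0 then 1 else 0 := dif_pos i.isLt
  by_cases h : i.1 + 1 < n
  · have hsucc : negIndicator g (i + 1) = if letter g ⟨i.1 + 1, h⟩ < 0 then 1 else 0 := dif_pos h
    have key := ite_bKey_lt_bKey (abs_letter_le g i) (abs_letter_le g ⟨i.1 + 1, h⟩)
    simp only [dif_pos h, hi, hsucc]
    split_ifs at key ⊢ <;> push_cast <;> omega
  · have hlast : negIndicator g (i + 1) = 0 := dif_neg h
    simp only [dif_neg h, hi, hlast]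
    split_ifs <;> push_cast <;> omega

end SignedPerm

open SignedPerm in
/-- for any signed permutation,
`maj_B(ε,w) = maj_A(ε,w) + nneg(ε,w)`. -/
theorem stmt18 (n : ℕ) (g : SignedPerm n) : majB g = majA g + nneg g := by
  have hend : negIndicator g n = 0 := dif_neg (lt_irrefl n)
  zify
  rw [majB, majA]
  push_cast [majB_summand_eq, sum_add_distrib]
  rw [Fin.sum_univ_eq_sum_range
      (fun j => ((j : ℤ) + 1) * (negIndicator g j - negIndicator g (j + 1))),
    sum_range_succ_mul_sub, hend, mul_zero, sub_zero, sum_range_negIndicator]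
end

section
/- Let s_k = (ε^{(k)}, t_k) and u_k = (1, t_k) in the hyperoctahedral group B_n, where t_k = (k,k−1,…,1) ∈ S_n and ε^{(k)} is the sign vector that is −1 in coordinate k and +1 elsewhere. Then every g ∈ B_n is uniquely expressible as g = s₁^{d₁}⋯s_n^{d_n} u_n^{c_n}⋯u₂^{c₂} with 0 ≤ d_k < 2 and 0 ≤ c_k < k; moreover for such g, maj_A(g) = maj(t_n^{c_n}⋯t₂^{c₂}) and Neg(g) = {i : d_i = 1}. -/
/-- `s_{i+1} = (ε^{(i+1)}, t_{i+1})`: the signed version of the cycle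
`t_{i+1} = (i+1, i, …, 1)`, with sign vector negative exactly in coordinate `i+1`. -/
def sgen {n : ℕ} (i : Fin n) : SignedPerm n :=
  ((Fin.cycleRange i)⁻¹, fun j => if j = i then 1 else 0)

/-- `u_{i+1} = (𝟏, t_{i+1})`: the unsigned version of `t_{i+1}`. -/
def ugen {n : ℕ} (i : Fin n) : SignedPerm n := ((Fin.cycleRange i)⁻¹, 0)

/-!
Write `g = S · U` with `S = s₁^{d₁}⋯sₙ^{dₙ}` and `U = (𝟏, Q)`, `Q = tₙ^{cₙ}⋯t₂^{c₂}`.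
Right multiplication by `sₖ` moves the `k`-th letter of the one-line word to the front and
negates it; that letter is `k`, larger in absolute value than the letters before it, so by
induction the word of `S` is increasing in the integer order, and its negative set is
`{i : dᵢ = 1}`. Since `U` carries no signs, the word of `g` is the word of `S` composed
with `Q`, so `g` has the signs of `S` and the descents of `Q`.
Uniqueness: `d` is read off the signs of `g`, then `Q` from `g`, and `cₖ` from `Q` by
evaluating at `k`, which the lower factors fix. Existence follows by counting:
`2ⁿ n! = |Bₙ|`.
-/

open Equiv

theorem Equiv.Perm.apply_lt_of_forall_le_apply_eq_self {n : ℕ} {σ : Perm (Fin n)} {k i : Fin n}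
    (hσ : ∀ j, k ≤ j → σ j = j) (hi : i < k) : σ i < k := by
  by_contra! h
  have : σ i = i := σ.injective (hσ _ h)
  exact absurd (this ▸ h) (not_le.mpr hi)

namespace Fin

variable {n : ℕ}

theorem cycleRange_inv_apply_of_gt {i j : Fin n} (h : i < j) : (cycleRange i)⁻¹ j = j := by
  rw [Perm.inv_eq_iff_eq, cycleRange_of_gt h]

theorem coe_cycleRange_inv_of_le {i j : Fin n} (h₀ : 0 < (j : ℕ)) (hj : j ≤ i) :
    ((cycleRange i)⁻¹ j : ℕ) = j - 1 := by
  have hlt : (⟨j - 1, by omega⟩ : Fin n) < i := by rw [Fin.lt_def]; dsimp; omega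
  have : cycleRange i ⟨j - 1, by omega⟩ = j :=
    Fin.ext (by rw [coe_cycleRange_of_lt hlt, Fin.val_mk]; omega)
  rw [Perm.inv_eq_iff_eq.mpr this.symm]

theorem coe_cycleRange_inv_pow_apply_self (i : Fin n) {e : ℕ} (he : e ≤ i) :
    (((cycleRange i)⁻¹ ^ e) i : ℕ) = i - e := by
  induction e with
  | zero => rfl
  | succ e ih =>
    rw [pow_succ', Perm.mul_apply]
    have hval := ih (by omega)
    rw [coe_cycleRange_inv_of_le (by omega) (Fin.le_def.mpr (by omega)), hval]
    omega

end Fin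

section CycleProd

open Fin

variable {n : ℕ}

def cyclePrefix (c : ∀ i : Fin n, Fin (i.1 + 1)) (k : ℕ) : Perm (Fin n) :=
  ((List.ofFn fun i : Fin n => (cycleRange i)⁻¹ ^ (c i : ℕ)).take k).reverse.prod

theorem cyclePrefix_succ (c : ∀ i : Fin n, Fin (i.1 + 1)) {k : ℕ} (hk : k < n) :
    cyclePrefix c (k + 1) = (cycleRange ⟨k, hk⟩)⁻¹ ^ (c ⟨k, hk⟩ : ℕ) * cyclePrefix c k := by
  rw [cyclePrefix, List.take_add_one, List.getElem?_eq_getElem (by simpa using hk)]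
  simp [cyclePrefix]

theorem cyclePrefix_apply_of_le (c : ∀ i : Fin n, Fin (i.1 + 1)) {k : ℕ} {j : Fin n}
    (hj : k ≤ j.1) : cyclePrefix c k j = j := by
  induction k with
  | zero => rfl
  | succ k ih =>
    rw [cyclePrefix_succ c (by omega), Perm.mul_apply, ih (by omega)]
    exact Perm.pow_apply_eq_self_of_apply_eq_self
      (cycleRange_inv_apply_of_gt (Fin.lt_def.mpr (show k < j.1 by omega))) _

theorem eq_of_cyclePrefix_eq {c c' : ∀ i : Fin n, Fin (i.1 + 1)} {k : ℕ} (hk : k ≤ n)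
    (h : cyclePrefix c k = cyclePrefix c' k) (i : Fin n) (hi : i.1 < k) : c i = c' i := by
  induction k with
  | zero => omega
  | succ k ih =>
    rw [cyclePrefix_succ c hk, cyclePrefix_succ c' hk] at h
    set κ : Fin n := ⟨k, hk⟩
    have hκ : (c κ : ℕ) = c' κ := by
      have hval := congrArg (fun σ : Perm (Fin n) => (σ κ : ℕ)) h
      simp only [Perm.mul_apply, cyclePrefix_apply_of_le (k := k) (j := κ) _ le_rfl] at hval
      rw [coe_cycleRange_inv_pow_apply_self κ (Nat.lt_succ_iff.mp (c κ).isLt),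
        coe_cycleRange_inv_pow_apply_self κ (Nat.lt_succ_iff.mp (c' κ).isLt)] at hval
      have := (c κ).isLt
      have := (c' κ).isLt
      omega
    rcases Nat.lt_succ_iff_lt_or_eq.mp hi with hi | hi
    · rw [hκ] at h
      exact ih (by omega) (mul_left_cancel h) hi
    · obtain rfl : i = κ := Fin.ext hi
      exact Fin.ext hκ

def cycleProd (c : ∀ i : Fin n, Fin (i.1 + 1)) : Perm (Fin n) :=
  (List.ofFn fun j : Fin n => (cycleRange j.rev)⁻¹ ^ (c j.rev : ℕ)).prod

theorem cyclePrefix_eq_cycleProd (c : ∀ i : Fin n, Fin (i.1 + 1)) :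
    cyclePrefix c n = cycleProd c := by
  rw [cyclePrefix, List.take_of_length_le (by simp), cycleProd]
  congr 1
  refine List.ext_getElem (by simp) fun i h₁ h₂ => ?_
  simp [Fin.rev, Nat.sub_sub, Nat.add_comm]

theorem cycleProd_injective : Function.Injective (cycleProd (n := n)) := fun c c' h =>
  funext fun i => eq_of_cyclePrefix_eq le_rfl
    (by rwa [cyclePrefix_eq_cycleProd, cyclePrefix_eq_cycleProd]) i i.isLt

end CycleProd

namespace SignedPerm

variable {n : ℕ}

instance : Fintype (SignedPerm n) :=
  inferInstanceAs (Fintype (Perm (Fin n) × (Fin n → ZMod 2)))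

theorem card_eq_factorial_mul_two_pow : Fintype.card (SignedPerm n) = n.factorial * 2 ^ n := by
  change Fintype.card (Perm (Fin n) × (Fin n → ZMod 2)) = _
  simp [Fintype.card_perm]

def ofPerm : Perm (Fin n) →* SignedPerm n where
  toFun σ := (σ, 0)
  map_one' := rfl
  map_mul' σ τ := ((mul_def (n := n) (σ, 0) (τ, 0)).trans (Prod.ext rfl (by simp))).symm

theorem ofPerm_apply (σ : Perm (Fin n)) : ofPerm σ = (σ, 0) := rfl

theorem ofPerm_injective : Function.Injective (ofPerm (n := n)) :=
  fun _ _ h => congrArg Prod.fst h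

theorem ugen_eq_ofPerm (i : Fin n) : ugen i = ofPerm (Fin.cycleRange i)⁻¹ := rfl

theorem snd_mul_ofPerm (g : SignedPerm n) (σ : Perm (Fin n)) : (g * ofPerm σ).2 = g.2 :=
  add_zero g.2

theorem letter_mul (g h : SignedPerm n) (j : Fin n) :
    letter (g * h) j = (if h.2 (h.1 j) = 1 then -1 else 1) * letter g (h.1 j) := by
  have sign_add : ∀ a b : ZMod 2, (if a + b = 1 then (-1 : ℤ) else 1)
      = (if b = 1 then -1 else 1) * (if a = 1 then -1 else 1) := by decide
  simp only [letter, mul_def, Perm.coe_inv, Perm.coe_mul, Function.comp_apply, Pi.add_apply,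
    symm_apply_apply, sign_add, mul_assoc]

theorem letter_mul_ofPerm (g : SignedPerm n) (σ : Perm (Fin n)) (j : Fin n) :
    letter (g * ofPerm σ) j = letter g (σ j) := by
  rw [letter_mul, ofPerm_apply]
  simp

theorem majA_mul_ofPerm {g : SignedPerm n} (hg : StrictMono (letter g)) (σ : Perm (Fin n)) :
    majA (g * ofPerm σ) = pmaj σ := by
  simp only [majA, pmaj, letter_mul_ofPerm, hg.lt_iff_lt]

theorem letter_of_apply_eq_self {g : SignedPerm n} {k : Fin n} (h₁ : g.1 k = k) (h₂ : g.2 k = 0) :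
    letter g k = k + 1 := by
  simp [letter, h₁, h₂]

theorem neg_le_letter (g : SignedPerm n) (i : Fin n) : -((g.1 i : ℕ) + 1 : ℤ) ≤ letter g i := by
  unfold letter
  split <;> omega

section MulSgen

variable {g : SignedPerm n} {k : Fin n}

theorem fst_mul_sgen_apply_of_gt {j : Fin n} (h : k < j) : (g * sgen k).1 j = g.1 j := by
  rw [mul_def]
  exact congrArg g.1 (Fin.cycleRange_inv_apply_of_gt h)

theorem snd_mul_sgen (hk : g.1 k = k) : (g * sgen k).2 = g.2 + Pi.single k 1 := by
  funext i
  have : g.1⁻¹ i = k ↔ i = k := by rw [Perm.inv_eq_iff_eq, hk, eq_comm]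
  rw [mul_def]
  simp only [Pi.add_apply, Function.comp_apply, sgen, this, Pi.single_apply]

theorem strictMono_letter_mul_sgen (hfix : ∀ j, k ≤ j → g.1 j = j) (hk : g.2 k = 0)
    (hg : StrictMono (letter g)) : StrictMono (letter (g * sgen k)) := by
  obtain ⟨m, rfl⟩ : ∃ m, n = m + 1 := ⟨n - 1, by have := k.pos; omega⟩
  have hk' : letter g k = k + 1 := letter_of_apply_eq_self (hfix k le_rfl) hk
  have hzero : letter (g * sgen k) 0 = -(k + 1) := by
    rw [letter_mul]
    simp [sgen, hk']
  have hsucc : ∀ j : Fin m, letter (g * sgen k) j.succ = letter g (k.succAbove j) := by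
    intro j
    rw [letter_mul]
    simp [sgen, Fin.succAbove_ne]
  have hlow : ∀ j : Fin m, -((k : ℤ) + 1) < letter g (k.succAbove j) := by
    intro j
    rcases (Fin.succAbove_ne k j).lt_or_gt with h | h
    · have hv := Fin.lt_def.mp (g.1.apply_lt_of_forall_le_apply_eq_self hfix h)
      have := neg_le_letter g (k.succAbove j)
      omega
    · have := hg h
      omega
  intro a b hab
  cases a using Fin.cases with
  | zero =>
    cases b using Fin.cases with
    | zero => exact absurd hab (lt_irrefl 0)
    | succ b => rw [hzero, hsucc]; exact hlow b
  | succ a =>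
    cases b using Fin.cases with
    | zero => exact absurd hab (Fin.not_lt_zero _)
    | succ b =>
      rw [hsucc, hsucc]
      exact hg (Fin.strictMono_succAbove k (Fin.succ_lt_succ_iff.mp hab))

end MulSgen

def sgenPrefix (d : Fin n → Fin 2) (k : ℕ) : SignedPerm n :=
  ((List.ofFn fun i : Fin n => sgen i ^ (d i : ℕ)).take k).prod

theorem sgenPrefix_succ (d : Fin n → Fin 2) {k : ℕ} (hk : k < n) :
    sgenPrefix d (k + 1) = sgenPrefix d k * sgen ⟨k, hk⟩ ^ (d ⟨k, hk⟩ : ℕ) := by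
  rw [sgenPrefix, List.prod_take_succ _ _ (by simpa using hk)]
  simp [sgenPrefix]

theorem sgenPrefix_spec (d : Fin n → Fin 2) {k : ℕ} (hk : k ≤ n) :
    (∀ j : Fin n, k ≤ j.1 → (sgenPrefix d k).1 j = j) ∧
    (sgenPrefix d k).2 = (fun i => if i.1 < k then ((d i : ℕ) : ZMod 2) else 0) ∧
    StrictMono (letter (sgenPrefix d k)) := by
  induction k with
  | zero =>
    refine ⟨fun _ _ => rfl, funext fun i => by simp [sgenPrefix, one_def], fun a b hab => ?_⟩
    simpa [sgenPrefix, one_def, letter] using hab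
  | succ k ih =>
    obtain ⟨hfix, hsnd, hmono⟩ := ih (by omega)
    set κ : Fin n := ⟨k, hk⟩
    have hκ : (sgenPrefix d k).1 κ = κ := hfix κ le_rfl
    have hsnd_succ : (fun i : Fin n => if i.1 < k + 1 then ((d i : ℕ) : ZMod 2) else 0)
        = (sgenPrefix d k).2 + Pi.single κ ((d κ : ℕ) : ZMod 2) := by
      funext i
      rw [hsnd]
      by_cases hi : i = κ
      · subst hi; simp [κ]
      · have : i.1 ≠ k := fun h => hi (Fin.ext h)
        simp only [Pi.add_apply, Pi.single_apply, hi, if_false, add_zero]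
        exact if_congr (by omega) rfl rfl
    rw [sgenPrefix_succ d hk]
    obtain hd | hd : d κ = 0 ∨ d κ = 1 := by omega
    · rw [hd, hsnd_succ, hd]
      simp only [Fin.val_zero, pow_zero, mul_one, Nat.cast_zero, Pi.single_zero, add_zero]
      exact ⟨fun j hj => hfix j (by omega), trivial, hmono⟩
    · rw [hd, hsnd_succ, hd]
      simp only [Fin.val_one, pow_one, Nat.cast_one]
      refine ⟨fun j hj => ?_, snd_mul_sgen hκ, ?_⟩
      · rw [fst_mul_sgen_apply_of_gt (Fin.lt_def.mpr (show k < j.1 by omega)), hfix j (by omega)]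
      · refine strictMono_letter_mul_sgen (fun j hj => hfix j hj) ?_ hmono
        simp [hsnd]

def sgenProd (d : Fin n → Fin 2) : SignedPerm n :=
  (List.ofFn fun i : Fin n => sgen i ^ (d i : ℕ)).prod

theorem sgenPrefix_eq_sgenProd (d : Fin n → Fin 2) : sgenPrefix d n = sgenProd d := by
  rw [sgenPrefix, List.take_of_length_le (by simp), sgenProd]

theorem snd_sgenProd (d : Fin n → Fin 2) : (sgenProd d).2 = fun i => ((d i : ℕ) : ZMod 2) := by
  rw [← sgenPrefix_eq_sgenProd, (sgenPrefix_spec d le_rfl).2.1]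
  simp

theorem strictMono_letter_sgenProd (d : Fin n → Fin 2) : StrictMono (letter (sgenProd d)) :=
  sgenPrefix_eq_sgenProd d ▸ (sgenPrefix_spec d le_rfl).2.2

theorem ugen_prod_eq_ofPerm (c : ∀ i : Fin n, Fin (i.1 + 1)) :
    (List.ofFn fun j : Fin n => ugen j.rev ^ (c j.rev : ℕ)).prod = ofPerm (cycleProd c) := by
  simp only [cycleProd, ugen_eq_ofPerm, ← map_pow, map_list_prod, List.map_ofFn]
  rfl

def encode (dc : (Fin n → Fin 2) × (∀ i : Fin n, Fin (i.1 + 1))) : SignedPerm n :=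
  sgenProd dc.1 * ofPerm (cycleProd dc.2)

theorem snd_encode (dc : (Fin n → Fin 2) × (∀ i : Fin n, Fin (i.1 + 1))) :
    (encode dc).2 = fun i => ((dc.1 i : ℕ) : ZMod 2) := by
  rw [encode, snd_mul_ofPerm, snd_sgenProd]

theorem majA_encode (dc : (Fin n → Fin 2) × (∀ i : Fin n, Fin (i.1 + 1))) :
    majA (encode dc) = pmaj (cycleProd dc.2) :=
  majA_mul_ofPerm (strictMono_letter_sgenProd dc.1) _

theorem encode_injective : Function.Injective (encode (n := n)) := by
  intro a b h
  have hcast : ∀ x y : Fin 2, ((x : ℕ) : ZMod 2) = (y : ℕ) → x = y := by decide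
  have hsnd := congrArg Prod.snd h
  rw [snd_encode, snd_encode] at hsnd
  have hd : a.1 = b.1 := funext fun i => hcast _ _ (congrFun hsnd i)
  rw [encode, encode, hd] at h
  exact Prod.ext hd (cycleProd_injective (ofPerm_injective (mul_left_cancel h)))

theorem encode_bijective : Function.Bijective (encode (n := n)) := by
  refine (Fintype.bijective_iff_injective_and_card _).mpr ⟨encode_injective, ?_⟩
  simp [card_eq_factorial_mul_two_pow, Fintype.card_pi,
    Fin.prod_univ_eq_prod_range (fun i => i + 1), Finset.prod_range_add_one_eq_factorial, mul_comm]

end SignedPerm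

open SignedPerm in
/-- every `g ∈ Bₙ` is uniquely expressible as
`g = s₁^{d₁}⋯sₙ^{dₙ} uₙ^{cₙ}⋯u₂^{c₂}` with `0 ≤ d_k < 2`, `0 ≤ c_k < k` (the `u₁`
factor is included with forced exponent `0`); moreover for such an expression,
`maj_A(g) = maj(tₙ^{cₙ}⋯t₂^{c₂})` and `Neg(g) = {i : dᵢ = 1}`. -/
theorem stmt19 (n : ℕ) (g : SignedPerm n) :
    (∃! dc : (Fin n → Fin 2) × (∀ i : Fin n, Fin (i.1 + 1)),
      g = (List.ofFn fun i : Fin n => sgen i ^ ((dc.1 i : ℕ))).prod *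
            (List.ofFn fun j : Fin n => ugen j.rev ^ ((dc.2 j.rev : ℕ))).prod) ∧
    (∀ dc : (Fin n → Fin 2) × (∀ i : Fin n, Fin (i.1 + 1)),
      g = (List.ofFn fun i : Fin n => sgen i ^ ((dc.1 i : ℕ))).prod *
            (List.ofFn fun j : Fin n => ugen j.rev ^ ((dc.2 j.rev : ℕ))).prod →
        majA g = pmaj ((List.ofFn fun j : Fin n =>
            ((Fin.cycleRange j.rev)⁻¹ : Equiv.Perm (Fin n)) ^ ((dc.2 j.rev : ℕ))).prod) ∧
        ∀ i : Fin n, (g.2 i = 1 ↔ (dc.1 i : ℕ) = 1)) := by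
  have hencode : ∀ dc : (Fin n → Fin 2) × (∀ i : Fin n, Fin (i.1 + 1)),
      (List.ofFn fun i : Fin n => sgen i ^ ((dc.1 i : ℕ))).prod *
        (List.ofFn fun j : Fin n => ugen j.rev ^ ((dc.2 j.rev : ℕ))).prod = encode dc :=
    fun dc => by rw [ugen_prod_eq_ofPerm]; rfl
  simp only [hencode]
  refine ⟨?_, fun dc hg => ?_⟩
  · obtain ⟨dc, hdc, huniq⟩ := encode_bijective.existsUnique g
    exact ⟨dc, hdc.symm, fun dc' h => huniq dc' h.symm⟩
  · subst hg
    have hone : ∀ x : Fin 2, ((x : ℕ) : ZMod 2) = 1 ↔ (x : ℕ) = 1 := by decide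
    exact ⟨majA_encode dc, fun i => by rw [snd_encode]; exact hone _⟩
end
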